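/- The set of half-decorated non-crossing partitions of [m'] ∪ [m], partially ordered by (P, X) ≤ (P', X') iff P ≤ P' (refinement order on non-crossing partitions) and x_p ≤ x'_p for every p ∈ [m], is a lattice; moreover, the meet of (P, X) and (P', X') is (P ∧ P', min{X, X'}) and the join is (P ∨ P', max{X, X'}), where ∧ and ∨ are the meet (common refinement) and join in the lattice of non-crossing partitions of the 2m labels and min/max are taken componentwise. In particular these two pairs are again half-decorated non-crossing partitions. -/
import Mathlib


namespace PY

/-! ### The ∞-gon `Z_{2m}`

Labels are elements of `Fin (2 * m)`, ordered `1' < 1 < 2' < 2 < ⋯ < m' < m`: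
the label `2 * i` is the primed (accumulation-point) label `(i+1)'` and the label
`2 * i + 1` is the unprimed label `i + 1`.  A point of `Z_{2m}` is a pair of a label and
an integer. -/

/-- Points of the ∞-gon `Z_{2m}`: a label and an integer. -/
abbrev Pt (m : ℕ) := Fin (2 * m) × ℤ

/-- Cyclic successor of a label. -/
def cycSucc {n : ℕ} (r : Fin n) : Fin n := ⟨(r.1 + 1) % n, Nat.mod_lt _ r.pos⟩

/-- Cyclic predecessor of a label. -/
def cycPred {n : ℕ} (r : Fin n) : Fin n := ⟨(r.1 + (n - 1)) % n, Nat.mod_lt _ r.pos⟩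

/-- Strict lexicographic order on the points of `Z_{2m}`. -/
def ptLt {m : ℕ} (a b : Pt m) : Prop := a.1 < b.1 ∨ (a.1 = b.1 ∧ a.2 < b.2)

/-- `sort2 a b` is the pair `(a, b)` arranged in (weakly) increasing lexicographic
order; it realizes the notation `|a, b|` for the arc connecting two points. -/
def sort2 {m : ℕ} (a b : Pt m) : Pt m × Pt m :=
  if a.1 < b.1 ∨ (a.1 = b.1 ∧ a.2 ≤ b.2) then (a, b) else (b, a)

/-- An ordered pair of points of `Z_{2m}` is an arc when its endpoints are in increasing
lexicographic order and, if they lie in the same copy of `ℤ`, differ by at least `2`. -/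
def IsArc {m : ℕ} (x : Pt m × Pt m) : Prop :=
  ptLt x.1 x.2 ∧ (x.1.1 = x.2.1 → x.1.2 + 2 ≤ x.2.2)

/-- The precovering conditions (PC conditions) for a set of arcs of `Z_{2m}`. -/
structure PCcond {m : ℕ} (U : Set (Pt m × Pt m)) : Prop where
  pc1 : ∀ p q : Fin (2 * m), p ≠ q → ∀ x1 x2 : ℕ → ℤ, StrictMono x1 → StrictMono x2 →
    (∀ n, ((p, x1 n), (q, x2 n)) ∈ U) →
    ∃ y1 y2 : ℕ → ℤ, StrictAnti y1 ∧ StrictAnti y2 ∧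
      ∀ n, sort2 (cycSucc p, y1 n) (cycSucc q, y2 n) ∈ U
  pc2 : ∀ p q : Fin (2 * m), p ≠ cycSucc q → ∀ x1 x2 : ℕ → ℤ,
    StrictAnti x1 → StrictMono x2 →
    (∀ n, ((p, x1 n), (q, x2 n)) ∈ U) →
    ∃ y1 y2 : ℕ → ℤ, StrictAnti y1 ∧ StrictAnti y2 ∧
      ∀ n, sort2 (p, y1 n) (cycSucc q, y2 n) ∈ U
  pc2' : ∀ p q : Fin (2 * m), q ≠ cycSucc p → p ≠ q → ∀ x1 x2 : ℕ → ℤ,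
    StrictMono x1 → StrictAnti x2 →
    (∀ n, ((p, x1 n), (q, x2 n)) ∈ U) →
    ∃ y1 y2 : ℕ → ℤ, StrictAnti y1 ∧ StrictAnti y2 ∧
      ∀ n, sort2 (cycSucc p, y1 n) (q, y2 n) ∈ U
  pc3 : ∀ p q : Fin (2 * m), ∀ (x1 : ℤ) (x2 : ℕ → ℤ), StrictMono x2 →
    (∀ n, ((p, x1), (q, x2 n)) ∈ U) →
    ∃ y2 : ℕ → ℤ, StrictAnti y2 ∧ ∀ n, sort2 (p, x1) (cycSucc q, y2 n) ∈ U
  pc3' : ∀ p q : Fin (2 * m), p ≠ q → ∀ (x1 : ℕ → ℤ) (x2 : ℤ), StrictMono x1 →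
    (∀ n, ((p, x1 n), (q, x2)) ∈ U) →
    ∃ y1 : ℕ → ℤ, StrictAnti y1 ∧ ∀ n, sort2 (cycSucc p, y1 n) (q, x2) ∈ U

/-- A point is admissible for the subcategory `A`: its label is unprimed, or it is a
point `(q, n)` of a primed copy with `n ≤ z0`. -/
def memA {m : ℕ} (z0 : ℤ) (a : Pt m) : Prop :=
  a.1.1 % 2 = 1 ∨ (a.1.1 % 2 = 0 ∧ a.2 ≤ z0)

/-- The set of arcs `A` determined by the choice of `z0`. -/
def setA (m : ℕ) (z0 : ℤ) : Set (Pt m × Pt m) :=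
  {x | memA z0 x.1 ∧ memA z0 x.2}

/-! ### Decorations

The linearly ordered set `{p} ∪ Z^(p) ∪ {p⁺}` is modelled as `WithBot (WithTop ℤ)`:
`⊥` is the accumulation point `p`, an integer `n` is the point `n` of `Z^(p)`, and the
top element is the accumulation point `p⁺`. -/

/-- The linearly ordered set `{p} ∪ Z^(p) ∪ {p⁺}`. -/
abbrev Dm := WithBot (WithTop ℤ)

/-- An integer, viewed in `{p} ∪ Z^(p) ∪ {p⁺}`. -/
def toDm (n : ℤ) : Dm := ((n : WithTop ℤ) : Dm)

/-- The element `p⁺` of `{p} ∪ Z^(p) ∪ {p⁺}`. -/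
def topDm : Dm := ((⊤ : WithTop ℤ) : Dm)

/-- The unprimed label `p ∈ [m]` with index `i`. -/
def unpr {m : ℕ} (i : Fin m) : Fin (2 * m) := ⟨2 * i.1 + 1, by have := i.2; omega⟩

/-- The primed label `p' ∈ [m']` with index `i`. -/
def prim {m : ℕ} (i : Fin m) : Fin (2 * m) := ⟨2 * i.1, by have := i.2; omega⟩

/-- Four points of `Fin n` (viewed on a circle with its natural cyclic order) are in
(strict, anticlockwise) cyclic order. -/
def Cyc4 {n : ℕ} (a b c d : Fin n) : Prop :=
  (a < b ∧ b < c ∧ c < d) ∨ (b < c ∧ c < d ∧ d < a) ∨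
  (c < d ∧ d < a ∧ a < b) ∨ (d < a ∧ a < b ∧ b < c)

/-- A partition (setoid) of `Fin n` is non-crossing if there are no elements
`i1, j1, i2, j2` in cyclic order with `i1, i2` in one block and `j1, j2` in a different
block. -/
def IsNoncrossing {n : ℕ} (P : Setoid (Fin n)) : Prop :=
  ∀ i1 j1 i2 j2 : Fin n, Cyc4 i1 j1 i2 j2 → P.r i1 i2 → P.r j1 j2 → P.r i1 j1

/-! ### Alternating non-crossing partitions and the arc sets `U_{(P,X)}` -/

/-- A point of `Z_{2m}` belongs to the interval `[x_{p⁻}, p⁺)` attached to the primed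
label `p' ∈ [m']` of index `j`: it lies in the primed copy `Z^(p)`, or in the unprimed
copy `Z^(p⁻)` above the decoration `x_{p⁻}`. -/
def altRegion {m : ℕ} (x : Fin m → Dm) (j : Fin m) (a : Pt m) : Prop :=
  a.1 = prim j ∨ (a.1 = unpr (cycPred j) ∧ x (cycPred j) ≤ toDm a.2)

/-- The set of arcs `U_{(P,X)}` associated with an alternating non-crossing partition
`(P, X)`: arcs both of whose endpoints lie in `⋃_{p ∈ B} [x_{p⁻}, p⁺)` for a single
block `B` of `P`. -/
def altU {m : ℕ} (P : Setoid (Fin m)) (x : Fin m → Dm) : Set (Pt m × Pt m) :=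
  {a | IsArc a ∧ ∃ b : Fin m,
    (∃ j, P.r b j ∧ altRegion x j a.1) ∧ (∃ j, P.r b j ∧ altRegion x j a.2)}

end PY

namespace PY

/-- The condition on the decorations of a half-decorated non-crossing partition of
`[m'] ∪ [m]`: for an unprimed label `p` (of index `i`, with cyclic successor the primed
label `p⁺` of index `i + 1`), if `{p}` is a block of `P` then `x_p ≠ p⁺`; if `p` and `p⁺`
lie in a common block of `P` then `x_p ≠ p`; otherwise `x_p ∈ Z^(p)`. -/
def HalfDecCond {m : ℕ} (P : Setoid (Fin (2 * m))) (x : Fin m → Dm) : Prop :=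
  ∀ i : Fin m,
    ((∀ r, P.r (unpr i) r → r = unpr i) → x i ≠ topDm) ∧
    (P.r (unpr i) (prim (cycSucc i)) → x i ≠ (⊥ : Dm)) ∧
    (¬ (∀ r, P.r (unpr i) r → r = unpr i) → ¬ P.r (unpr i) (prim (cycSucc i)) →
      ∃ n : ℤ, x i = toDm n)

/-- The poset of non-crossing partitions of the cyclically ordered `2m`-element label
set `[m'] ∪ [m]`, ordered by refinement. -/
abbrev NCP2 (m : ℕ) := {P : Setoid (Fin (2 * m)) // IsNoncrossing P}

/-- Half-decorated non-crossing partitions of `[m'] ∪ [m]`. -/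
def HDNC (m : ℕ) :=
  {q : Setoid (Fin (2 * m)) × (Fin m → Dm) // IsNoncrossing q.1 ∧ HalfDecCond q.1 q.2}

/-- The partial order on half-decorated non-crossing partitions:
`(P, X) ≤ (P', X')` iff `P ≤ P'` (refinement) and `x_p ≤ x'_p` for every `p ∈ [m]`. -/
instance {m : ℕ} : PartialOrder (HDNC m) where
  le A B := A.1.1 ≤ B.1.1 ∧ ∀ p, A.1.2 p ≤ B.1.2 p
  le_refl A := ⟨le_refl _, fun _ => le_refl _⟩
  le_trans A B C h h' := ⟨le_trans h.1 h'.1, fun p => le_trans (h.2 p) (h'.2 p)⟩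
  le_antisymm A B h h' := by
    have h1 : A.1.1 = B.1.1 := le_antisymm h.1 h'.1
    have h2 : A.1.2 = B.1.2 := funext fun p => le_antisymm (h.2 p) (h'.2 p)
    exact Subtype.ext (Prod.ext h1 h2)

end PY

-- auxiliary lemmas to be inserted before the theorem
namespace PY

lemma toDm_ne_bot (n : ℤ) : toDm n ≠ (⊥ : Dm) := WithBot.coe_ne_bot

lemma toDm_ne_top (n : ℤ) : toDm n ≠ topDm := by
  simp [toDm, topDm]

lemma topDm_eq_top : topDm = (⊤ : Dm) := rfl

lemma dm_trichotomy (x : Dm) : x = ⊥ ∨ x = topDm ∨ ∃ n : ℤ, x = toDm n := by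
  rcases x with _ | x
  · exact Or.inl rfl
  · rcases x with _ | n
    · exact Or.inr (Or.inl rfl)
    · exact Or.inr (Or.inr ⟨n, rfl⟩)

lemma unpr_ne_prim {m : ℕ} (i j : Fin m) : unpr i ≠ prim j := by
  intro h
  have := congrArg Fin.val h
  simp [unpr, prim] at this
  omega

/-- From cyclic order, the first and third points are distinct. -/
lemma Cyc4.ne13 {n : ℕ} {a b c d : Fin n} (h : Cyc4 a b c d) : a ≠ c := by
  rcases h with ⟨h1, h2, _⟩ | ⟨h1, h2, h3⟩ | ⟨h1, h2, h3⟩ | ⟨h1, h2, h3⟩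
  · exact (h1.trans h2).ne
  · exact (h2.trans h3).ne'
  · exact (h1.trans h2).ne'
  · exact (h2.trans h3).ne

/-- From cyclic order, the second and fourth points are distinct. -/
lemma Cyc4.ne24 {n : ℕ} {a b c d : Fin n} (h : Cyc4 a b c d) : b ≠ d := by
  rcases h with ⟨_, h2, h3⟩ | ⟨h1, h2, _⟩ | ⟨h1, h2, h3⟩ | ⟨h1, h2, h3⟩
  · exact (h2.trans h3).ne
  · exact (h1.trans h2).ne
  · exact (h2.trans h3).ne'
  · exact (h1.trans h2).ne'

/-- The two-block partition `{u}, {u}ᶜ`. -/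
def twoBlock {n : ℕ} (u : Fin n) : Setoid (Fin n) :=
  ⟨fun a b => (a = u ↔ b = u),
    ⟨fun _ => Iff.rfl, fun h => h.symm, fun h h' => h.trans h'⟩⟩

lemma twoBlock_noncrossing {n : ℕ} (u : Fin n) : IsNoncrossing (twoBlock u) := by
  intro i1 j1 i2 j2 hc hi hj
  have hi1 : i1 ≠ u := fun h => hc.ne13 (h.trans (hi.mp h).symm)
  have hj1 : j1 ≠ u := fun h => hc.ne24 (h.trans (hj.mp h).symm)
  exact iff_of_false hi1 hj1

end PY

/-!
STATEMENT 10: The set of half-decorated non-crossing partitions of [m'] ∪ [m], partially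
ordered by (P, X) ≤ (P', X') iff P ≤ P' and x_p ≤ x'_p for every p ∈ [m], is a lattice;
the meet of (P, X) and (P', X') is (P ∧ P', min{X, X'}) (where P ∧ P' is the common
refinement) and the join is (P ∨ P', max{X, X'}) (where P ∨ P' is the join in the
lattice of non-crossing partitions of the 2m labels).  In particular these two pairs
are again half-decorated non-crossing partitions.
-/

open PY in
theorem halfDecorated_noncrossing_partitions_lattice
    (m : ℕ) (hm : 0 < m) (A B : HDNC m) :
    -- the pair has a meet, given by the common refinement and the componentwise min
    (∃ C : HDNC m,
      (∀ r s : Fin (2 * m), C.1.1.r r s ↔ (A.1.1.r r s ∧ B.1.1.r r s)) ∧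
      (∀ p : Fin m, C.1.2 p = min (A.1.2 p) (B.1.2 p)) ∧
      IsGLB {A, B} C) ∧
    -- the pair has a join, given by the join of the non-crossing partitions and the
    -- componentwise max
    (∃ C : HDNC m,
      IsLUB ({⟨A.1.1, A.2.1⟩, ⟨B.1.1, B.2.1⟩} : Set (NCP2 m)) ⟨C.1.1, C.2.1⟩ ∧
      (∀ p : Fin m, C.1.2 p = max (A.1.2 p) (B.1.2 p)) ∧
      IsLUB {A, B} C) := by
  classical
  -- generic consequences of `HalfDecCond`
  have key_bot : ∀ (P : Setoid (Fin (2 * m))) (x : Fin m → Dm), HalfDecCond P x →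
      ∀ i : Fin m, x i = ⊥ → ∀ r, P.r (unpr i) r → r = unpr i := by
    intro P x h i hx r hr
    by_contra hne
    have hnsing : ¬ (∀ r, P.r (unpr i) r → r = unpr i) := fun hall => hne (hall r hr)
    by_cases hpr : P.r (unpr i) (prim (cycSucc i))
    · exact (h i).2.1 hpr hx
    · obtain ⟨n, hn⟩ := (h i).2.2 hnsing hpr
      exact toDm_ne_bot n (hn.symm.trans hx)
  have key_top : ∀ (P : Setoid (Fin (2 * m))) (x : Fin m → Dm), HalfDecCond P x →
      ∀ i : Fin m, x i = topDm → P.r (unpr i) (prim (cycSucc i)) := by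
    intro P x h i hx
    by_contra hpr
    by_cases hsing : ∀ r, P.r (unpr i) r → r = unpr i
    · exact (h i).1 hsing hx
    · obtain ⟨n, hn⟩ := (h i).2.2 hsing hpr
      exact toDm_ne_top n (hn.symm.trans hx)
  constructor
  · -- the meet: common refinement and componentwise min
    let M : Setoid (Fin (2 * m)) :=
      ⟨fun a b => A.1.1.r a b ∧ B.1.1.r a b,
        ⟨fun a => ⟨A.1.1.refl' a, B.1.1.refl' a⟩,
         fun h => ⟨A.1.1.symm' h.1, B.1.1.symm' h.2⟩,
         fun h h' => ⟨A.1.1.trans' h.1 h'.1, B.1.1.trans' h.2 h'.2⟩⟩⟩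
    have hMnc : IsNoncrossing M := fun i1 j1 i2 j2 hc hi hj =>
      ⟨A.2.1 _ _ _ _ hc hi.1 hj.1, B.2.1 _ _ _ _ hc hi.2 hj.2⟩
    have hMhd : HalfDecCond M (fun p => min (A.1.2 p) (B.1.2 p)) := by
      intro i
      have hu : unpr i ≠ prim (cycSucc i) := unpr_ne_prim i (cycSucc i)
      refine ⟨?_, ?_, ?_⟩
      · intro hsing hmin
        obtain ⟨h1, h2⟩ := min_eq_top.mp hmin
        exact hu (hsing _ ⟨key_top _ _ A.2.2 i h1, key_top _ _ B.2.2 i h2⟩).symm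
      · intro hr hmin
        rcases min_eq_bot.mp hmin with h | h
        · exact (A.2.2 i).2.1 hr.1 h
        · exact (B.2.2 i).2.1 hr.2 h
      · intro hnsing hnr
        rcases dm_trichotomy (min (A.1.2 i) (B.1.2 i)) with h | h | h
        · rcases min_eq_bot.mp h with hb | hb
          · exact (hnsing fun r hr => key_bot _ _ A.2.2 i hb r hr.1).elim
          · exact (hnsing fun r hr => key_bot _ _ B.2.2 i hb r hr.2).elim
        · obtain ⟨h1, h2⟩ := min_eq_top.mp h
          exact absurd ⟨key_top _ _ A.2.2 i h1, key_top _ _ B.2.2 i h2⟩ hnr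
        · exact h
    refine ⟨⟨(M, fun p => min (A.1.2 p) (B.1.2 p)), hMnc, hMhd⟩,
      fun r s => Iff.rfl, fun p => rfl, ?_, ?_⟩
    · -- lower bound
      intro D hD
      simp only [Set.mem_insert_iff, Set.mem_singleton_iff] at hD
      rcases hD with rfl | rfl
      · exact ⟨fun a b h => h.1, fun p => min_le_left _ _⟩
      · exact ⟨fun a b h => h.2, fun p => min_le_right _ _⟩
    · -- greatest lower bound
      intro D hD
      have hDA : D ≤ A := hD (Set.mem_insert _ _)
      have hDB : D ≤ B := hD (Set.mem_insert_of_mem _ rfl)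
      exact ⟨fun a b h => ⟨hDA.1 h, hDB.1 h⟩, fun p => le_min (hDA.2 p) (hDB.2 p)⟩
  · -- the join
    let J : Setoid (Fin (2 * m)) :=
      ⟨fun a b => ∀ P : Setoid (Fin (2 * m)), IsNoncrossing P →
          A.1.1 ≤ P → B.1.1 ≤ P → P.r a b,
        ⟨fun a P _ _ _ => P.refl' a,
         fun h P hP h1 h2 => P.symm' (h P hP h1 h2),
         fun h h' P hP h1 h2 => P.trans' (h P hP h1 h2) (h' P hP h1 h2)⟩⟩
    have hJnc : IsNoncrossing J := fun i1 j1 i2 j2 hc hi hj P hP h1 h2 =>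
      hP _ _ _ _ hc (hi P hP h1 h2) (hj P hP h1 h2)
    have hAJ : A.1.1 ≤ J := fun a b h P _ h1 _ => h1 h
    have hBJ : B.1.1 ≤ J := fun a b h P _ _ h2 => h2 h
    -- if `unpr i` is a singleton in both `A` and `B`, it is a singleton in `J`
    have hsingJ : ∀ i : Fin m, (∀ r, A.1.1.r (unpr i) r → r = unpr i) →
        (∀ r, B.1.1.r (unpr i) r → r = unpr i) →
        ∀ r, J.r (unpr i) r → r = unpr i := by
      intro i hA hB r hr
      have h2a : A.1.1 ≤ twoBlock (unpr i) := by
        intro a b h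
        constructor
        · intro ha; exact hA b (ha ▸ h)
        · intro hb; exact hA a (hb ▸ A.1.1.symm' h)
      have h2b : B.1.1 ≤ twoBlock (unpr i) := by
        intro a b h
        constructor
        · intro ha; exact hB b (ha ▸ h)
        · intro hb; exact hB a (hb ▸ B.1.1.symm' h)
      exact (hr (twoBlock (unpr i)) (twoBlock_noncrossing _) h2a h2b).mp rfl
    have hJhd : HalfDecCond J (fun p => max (A.1.2 p) (B.1.2 p)) := by
      intro i
      have hu : unpr i ≠ prim (cycSucc i) := unpr_ne_prim i (cycSucc i)
      refine ⟨?_, ?_, ?_⟩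
      · intro hsing hmax
        rcases max_eq_top.mp hmax with h | h
        · exact hu (hsing _ (hAJ (key_top _ _ A.2.2 i h))).symm
        · exact hu (hsing _ (hBJ (key_top _ _ B.2.2 i h))).symm
      · intro hr hmax
        obtain ⟨h1, h2⟩ := max_eq_bot.mp hmax
        exact hu (hsingJ i (key_bot _ _ A.2.2 i h1) (key_bot _ _ B.2.2 i h2) _ hr).symm
      · intro hnsing hnr
        rcases dm_trichotomy (max (A.1.2 i) (B.1.2 i)) with h | h | h
        · obtain ⟨h1, h2⟩ := max_eq_bot.mp h
          exact (hnsing (hsingJ i (key_bot _ _ A.2.2 i h1) (key_bot _ _ B.2.2 i h2))).elim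
        · rcases max_eq_top.mp h with h' | h'
          · exact absurd (hAJ (key_top _ _ A.2.2 i h')) hnr
          · exact absurd (hBJ (key_top _ _ B.2.2 i h')) hnr
        · exact h
    refine ⟨⟨(J, fun p => max (A.1.2 p) (B.1.2 p)), hJnc, hJhd⟩, ⟨?_, ?_⟩,
      fun p => rfl, ?_, ?_⟩
    · -- upper bound in NCP2
      intro Q hQ
      simp only [Set.mem_insert_iff, Set.mem_singleton_iff] at hQ
      rcases hQ with rfl | rfl
      · exact hAJ
      · exact hBJ
    · -- least upper bound in NCP2
      intro Q hQ
      have h1 : A.1.1 ≤ Q.1 := hQ (Set.mem_insert _ _)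
      have h2 : B.1.1 ≤ Q.1 := hQ (Set.mem_insert_of_mem _ rfl)
      exact fun a b h => h Q.1 Q.2 h1 h2
    · -- upper bound in HDNC
      intro D hD
      simp only [Set.mem_insert_iff, Set.mem_singleton_iff] at hD
      rcases hD with rfl | rfl
      · exact ⟨hAJ, fun p => le_max_left _ _⟩
      · exact ⟨hBJ, fun p => le_max_right _ _⟩
    · -- least upper bound in HDNC
      intro D hD
      have hDA : A ≤ D := hD (Set.mem_insert _ _)
      have hDB : B ≤ D := hD (Set.mem_insert_of_mem _ rfl)
      exact ⟨fun a b h => h D.1.1 D.2.1 hDA.1 hDB.1, fun p => max_le (hDA.2 p) (hDB.2 p)⟩
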